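/- If A is an n×n real symmetric matrix and B is an m×m principal submatrix of A (m ≤ n), then for each i with 1 ≤ i ≤ m, the eigenvalues satisfy λ_{n-m+i}(A) ≤ μ_i(B) ≤ λ_i(A), where eigenvalues are listed in nonincreasing order (Cauchy interlacing). -/

import Mathlib

noncomputable def sortedEigenvalues {ι : Type*} [Fintype ι] [DecidableEq ι]
    (A : Matrix ι ι ℝ) (hA : A.IsHermitian) : List ℝ :=
  (Finset.univ.val.map hA.eigenvalues).sort (· ≤ ·)

/-- `eig A hA k` is the `k`-th largest eigenvalue of `A` (1-indexed). -/
noncomputable def eig {ι : Type*} [Fintype ι] [DecidableEq ι]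
    (A : Matrix ι ι ℝ) (hA : A.IsHermitian) (k : ℕ) : ℝ :=
  (sortedEigenvalues A hA)[Fintype.card ι - k]!

/-!
Extension by zero embeds `ℝ^m` isometrically into `ℝ^n` and carries the quadratic form of the
principal submatrix `B` to that of `A`. The span `U` of the eigenvectors of `B` for its `i`
largest eigenvalues has Rayleigh quotients `≥ μ_i`; the span `W` of the eigenvectors of `A` for
its `n - i + 1` smallest eigenvalues has Rayleigh quotients `≤ λ_i`. Since
`dim U + dim W = n + 1`, the image of `U` meets `W` in a nonzero vector, whence `μ_i ≤ λ_i`.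
The lower bound `λ_{n-m+i} ≤ μ_i` is the same count with largest and smallest exchanged.
-/

open Function Matrix Module Submodule
open scoped InnerProductSpace RealInnerProductSpace

lemma Orthonormal.inner_eq_zero_of_mem_span_image {E ι : Type*} [NormedAddCommGroup E]
    [InnerProductSpace ℝ E] {v : ι → E} (hv : Orthonormal ℝ v) {s : Set ι} {x : E}
    (hx : x ∈ span ℝ (v '' s)) {j : ι} (hj : j ∉ s) : ⟪v j, x⟫ = 0 := by
  have : span ℝ (v '' s) ≤ (span ℝ {v j})ᗮ := by
    rw [span_le]
    rintro _ ⟨k, hk, rfl⟩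
    exact mem_orthogonal_singleton_iff_inner_right.mpr (hv.inner_eq_zero fun h => hj (h ▸ hk))
  exact mem_orthogonal_singleton_iff_inner_right.mp (this hx)

lemma LinearIndependent.finrank_span_image_finset {K V ι : Type*} [DivisionRing K]
    [AddCommGroup V] [Module K V] {v : ι → V} (hv : LinearIndependent K v) (s : Finset ι) :
    finrank K (span K (v '' s)) = s.card := by
  rw [Set.image_eq_range]
  exact (finrank_span_eq_card (hv.comp _ Subtype.val_injective)).trans (by simp)

namespace LinearMap.IsSymmetric

variable {E : Type*} [NormedAddCommGroup E] [InnerProductSpace ℝ E] [FiniteDimensional ℝ E]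
  {T : E →ₗ[ℝ] E} {n : ℕ} (hT : T.IsSymmetric) (hn : finrank ℝ E = n)

lemma inner_map_self_eq_sum (x : E) :
    ⟪T x, x⟫ = ∑ j, hT.eigenvalues hn j * ‖⟪hT.eigenvectorBasis hn j, x⟫‖ ^ 2 := by
  rw [← (hT.eigenvectorBasis hn).sum_inner_mul_inner]
  refine Finset.sum_congr rfl fun j _ => ?_
  rw [hT, apply_eigenvectorBasis, inner_smul_right, real_inner_comm x]
  simp only [RCLike.ofReal_real_eq_id, id_eq, Real.norm_eq_abs, sq_abs]
  ring

lemma inner_map_self_le_of_mem_span {S : Set (Fin n)} {c : ℝ}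
    (hc : ∀ j ∈ S, hT.eigenvalues hn j ≤ c) {x : E}
    (hx : x ∈ span ℝ (hT.eigenvectorBasis hn '' S)) : ⟪T x, x⟫ ≤ c * ‖x‖ ^ 2 := by
  rw [inner_map_self_eq_sum hT hn, ← (hT.eigenvectorBasis hn).sum_sq_norm_inner_right,
    Finset.mul_sum]
  refine Finset.sum_le_sum fun j _ => ?_
  by_cases hj : j ∈ S
  · exact mul_le_mul_of_nonneg_right (hc j hj) (sq_nonneg _)
  · simp [(hT.eigenvectorBasis hn).orthonormal.inner_eq_zero_of_mem_span_image hx hj]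

lemma le_inner_map_self_of_mem_span {S : Set (Fin n)} {c : ℝ}
    (hc : ∀ j ∈ S, c ≤ hT.eigenvalues hn j) {x : E}
    (hx : x ∈ span ℝ (hT.eigenvectorBasis hn '' S)) : c * ‖x‖ ^ 2 ≤ ⟪T x, x⟫ := by
  rw [inner_map_self_eq_sum hT hn, ← (hT.eigenvectorBasis hn).sum_sq_norm_inner_right,
    Finset.mul_sum]
  refine Finset.sum_le_sum fun j _ => ?_
  by_cases hj : j ∈ S
  · exact mul_le_mul_of_nonneg_right (hc j hj) (sq_nonneg _)
  · simp [(hT.eigenvectorBasis hn).orthonormal.inner_eq_zero_of_mem_span_image hx hj]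

variable {E' : Type*} [NormedAddCommGroup E'] [InnerProductSpace ℝ E'] [FiniteDimensional ℝ E']
  {T' : E' →ₗ[ℝ] E'} {m : ℕ} (hT' : T'.IsSymmetric) (hm : finrank ℝ E' = m) (V : E' →ₗᵢ[ℝ] E)

lemma exists_ne_zero_mem_span_map_mem_span (S : Finset (Fin m)) (R : Finset (Fin n))
    (hSR : n < S.card + R.card) :
    ∃ y ≠ 0, y ∈ span ℝ (hT'.eigenvectorBasis hm '' S) ∧
      V y ∈ span ℝ (hT.eigenvectorBasis hn '' R) := by
  have hU := ((hT'.eigenvectorBasis hm).orthonormal.comp_linearIsometry V).linearIndependent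
    |>.finrank_span_image_finset S
  have hW := (hT.eigenvectorBasis hn).orthonormal.linearIndependent.finrank_span_image_finset R
  rw [Set.image_comp, show span ℝ (V '' _) = _ from span_image V.toLinearMap] at hU
  have hUW : ¬ Disjoint ((span ℝ (hT'.eigenvectorBasis hm '' S)).map V.toLinearMap)
      (span ℝ (hT.eigenvectorBasis hn '' R)) := fun h => by
    have := finrank_add_finrank_le_of_disjoint h
    omega
  simp only [disjoint_def, not_forall] at hUW
  obtain ⟨x, hxU, hxW, hx0⟩ := hUW
  obtain ⟨y, hy, rfl⟩ := mem_map.mp hxU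
  exact ⟨y, fun h => hx0 (by simp [h]), hy, hxW⟩

theorem eigenvalues_le_of_compression (hV : ∀ y, ⟪T' y, y⟫ = ⟪T (V y), V y⟫)
    (i : Fin m) (j : Fin n) (hji : (j : ℕ) ≤ i) :
    hT'.eigenvalues hm i ≤ hT.eigenvalues hn j := by
  obtain ⟨y, hy0, hy, hVy⟩ := exists_ne_zero_mem_span_map_mem_span hT hn hT' hm V
    (Finset.Iic i) (Finset.Ici j) (by simp only [Fin.card_Iic, Fin.card_Ici]; omega)
  have hy2 : 0 < ‖y‖ ^ 2 := by positivity
  refine le_of_mul_le_mul_right ?_ hy2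
  calc hT'.eigenvalues hm i * ‖y‖ ^ 2
      ≤ ⟪T' y, y⟫ := hT'.le_inner_map_self_of_mem_span hm
        (fun k hk => hT'.eigenvalues_antitone hm (Finset.mem_Iic.mp hk)) hy
    _ = ⟪T (V y), V y⟫ := hV y
    _ ≤ hT.eigenvalues hn j * ‖V y‖ ^ 2 := hT.inner_map_self_le_of_mem_span hn
        (fun k hk => hT.eigenvalues_antitone hn (Finset.mem_Ici.mp hk)) hVy
    _ = hT.eigenvalues hn j * ‖y‖ ^ 2 := by rw [V.norm_map]

theorem le_eigenvalues_of_compression (hV : ∀ y, ⟪T' y, y⟫ = ⟪T (V y), V y⟫)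
    (i : Fin m) (j : Fin n) (hij : n + i ≤ j + m) :
    hT.eigenvalues hn j ≤ hT'.eigenvalues hm i := by
  obtain ⟨y, hy0, hy, hVy⟩ := exists_ne_zero_mem_span_map_mem_span hT hn hT' hm V
    (Finset.Ici i) (Finset.Iic j) (by simp only [Fin.card_Iic, Fin.card_Ici]; omega)
  have hy2 : 0 < ‖y‖ ^ 2 := by positivity
  refine le_of_mul_le_mul_right ?_ hy2
  calc hT.eigenvalues hn j * ‖y‖ ^ 2
      = hT.eigenvalues hn j * ‖V y‖ ^ 2 := by rw [V.norm_map]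
    _ ≤ ⟪T (V y), V y⟫ := hT.le_inner_map_self_of_mem_span hn
        (fun k hk => hT.eigenvalues_antitone hn (Finset.mem_Iic.mp hk)) hVy
    _ = ⟪T' y, y⟫ := (hV y).symm
    _ ≤ hT'.eigenvalues hm i * ‖y‖ ^ 2 := hT'.inner_map_self_le_of_mem_span hm
        (fun k hk => hT'.eigenvalues_antitone hm (Finset.mem_Ici.mp hk)) hy

end LinearMap.IsSymmetric

section ExtendByZero

variable {κ ι : Type*} [Fintype κ] [Fintype ι] {f : κ → ι}

lemma dotProduct_extend_zero {R : Type*} [NonUnitalNonAssocSemiring R]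
    (hf : Injective f) (w : ι → R) (y : κ → R) :
    w ⬝ᵥ extend f y 0 = (w ∘ f) ⬝ᵥ y := by
  classical
  calc ∑ k, w k * extend f y 0 k = ∑ k ∈ Finset.univ.map ⟨f, hf⟩, w k * extend f y 0 k := by
        refine (Finset.sum_subset (Finset.subset_univ _) fun k _ hk => ?_).symm
        rw [extend_apply' _ _ _ fun ⟨l, hl⟩ => hk (by simp [← hl]), Pi.zero_apply, mul_zero]
    _ = ∑ l, w (f l) * y l := by simp [hf.extend_apply]

lemma Matrix.mulVec_extend_zero_comp {R : Type*} [NonUnitalNonAssocSemiring R]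
    (hf : Injective f) (A : Matrix ι ι R) (y : κ → R) :
    (A *ᵥ extend f y 0) ∘ f = A.submatrix f f *ᵥ y :=
  funext fun l => dotProduct_extend_zero hf (A (f l)) y

lemma Matrix.extend_zero_dotProduct_mulVec {R : Type*} [NonUnitalCommSemiring R]
    (hf : Injective f) (A : Matrix ι ι R) (y : κ → R) :
    extend f y 0 ⬝ᵥ (A *ᵥ extend f y 0) = y ⬝ᵥ (A.submatrix f f *ᵥ y) := by
  rw [dotProduct_comm, dotProduct_extend_zero hf, mulVec_extend_zero_comp hf, dotProduct_comm]

noncomputable def EuclideanSpace.extendByZero (hf : Injective f) :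
    EuclideanSpace ℝ κ →ₗᵢ[ℝ] EuclideanSpace ℝ ι :=
  LinearMap.isometryOfInner
    ((WithLp.linearEquiv 2 ℝ (ι → ℝ)).symm.toLinearMap ∘ₗ ExtendByZero.linearMap ℝ f ∘ₗ
      (WithLp.linearEquiv 2 ℝ (κ → ℝ)).toLinearMap)
    fun x y => by
      simp only [EuclideanSpace.inner_eq_star_dotProduct, star_trivial]
      show extend f y.ofLp 0 ⬝ᵥ extend f x.ofLp 0 = y.ofLp ⬝ᵥ x.ofLp
      rw [dotProduct_extend_zero hf, extend_comp hf]

lemma EuclideanSpace.ofLp_extendByZero (hf : Injective f) (y : EuclideanSpace ℝ κ) :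
    (extendByZero hf y).ofLp = extend f y.ofLp 0 :=
  rfl

variable [DecidableEq κ] [DecidableEq ι]

lemma Matrix.inner_toEuclideanLin_submatrix (hf : Injective f) (A : Matrix ι ι ℝ)
    (y : EuclideanSpace ℝ κ) :
    ⟪toEuclideanLin (A.submatrix f f) y, y⟫ =
      ⟪toEuclideanLin A (EuclideanSpace.extendByZero hf y), EuclideanSpace.extendByZero hf y⟫ := by
  simp only [EuclideanSpace.inner_eq_star_dotProduct, star_trivial, toLpLin_apply,
    EuclideanSpace.ofLp_extendByZero]
  exact (extend_zero_dotProduct_mulVec hf A y.ofLp).symm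

end ExtendByZero

section SortedEigenvalues

variable {ι : Type*} [Fintype ι] [DecidableEq ι]

lemma sortedEigenvalues_eq_reverse (A : Matrix ι ι ℝ) (hA : A.IsHermitian) :
    sortedEigenvalues A hA = (List.ofFn hA.eigenvalues₀).reverse := by
  have hperm : Finset.univ.val.map hA.eigenvalues = (List.ofFn hA.eigenvalues₀).reverse := by
    have : hA.eigenvalues = hA.eigenvalues₀ ∘ (Fintype.equivOfCardEq (Fintype.card_fin _)).symm :=
      rfl
    rw [this, ← Multiset.map_map, Multiset.map_univ_val_equiv, Fin.univ_val_map,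
      Multiset.coe_reverse]
  rw [sortedEigenvalues, hperm, Multiset.coe_sort]
  exact List.mergeSort_of_pairwise
    (by simpa using hA.eigenvalues₀_antitone.sortedGE_ofFn.reverse.pairwise)

lemma eig_eq_eigenvalues₀ (A : Matrix ι ι ℝ) (hA : A.IsHermitian) {k : ℕ}
    (hk : k < Fintype.card ι) : eig A hA (k + 1) = hA.eigenvalues₀ ⟨k, hk⟩ := by
  have hlt : Fintype.card ι - (k + 1) < (sortedEigenvalues A hA).length := by
    rw [sortedEigenvalues_eq_reverse, List.length_reverse, List.length_ofFn]
    omega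
  rw [eig, getElem!_pos (sortedEigenvalues A hA) _ hlt]
  simp only [sortedEigenvalues_eq_reverse, List.getElem_reverse, List.getElem_ofFn,
    List.length_ofFn]
  congr 2
  omega

end SortedEigenvalues

namespace Matrix.IsHermitian

variable {κ ι : Type*} [Fintype κ] [DecidableEq κ] [Fintype ι] [DecidableEq ι]
  {A : Matrix ι ι ℝ} {f : κ → ι}

theorem eigenvalues₀_submatrix_le (hA : A.IsHermitian) (hf : Injective f)
    (hB : (A.submatrix f f).IsHermitian) (i : Fin (Fintype.card κ)) (j : Fin (Fintype.card ι))
    (hji : (j : ℕ) ≤ i) : hB.eigenvalues₀ i ≤ hA.eigenvalues₀ j :=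
  LinearMap.IsSymmetric.eigenvalues_le_of_compression _ _ _ _ (EuclideanSpace.extendByZero hf)
    (inner_toEuclideanLin_submatrix hf A) i j hji

theorem le_eigenvalues₀_submatrix (hA : A.IsHermitian) (hf : Injective f)
    (hB : (A.submatrix f f).IsHermitian) (i : Fin (Fintype.card κ)) (j : Fin (Fintype.card ι))
    (hij : Fintype.card ι + i ≤ j + Fintype.card κ) : hA.eigenvalues₀ j ≤ hB.eigenvalues₀ i :=
  LinearMap.IsSymmetric.le_eigenvalues_of_compression _ _ _ _ (EuclideanSpace.extendByZero hf)
    (inner_toEuclideanLin_submatrix hf A) i j hij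

end Matrix.IsHermitian

theorem cauchy_interlacing {n m : ℕ}
    (A : Matrix (Fin n) (Fin n) ℝ) (hA : A.IsHermitian)
    (f : Fin m → Fin n) (hf : Function.Injective f)
    (hB : (A.submatrix f f).IsHermitian) :
    ∀ i : ℕ, 1 ≤ i → i ≤ m →
      eig A hA (n - m + i) ≤ eig (A.submatrix f f) hB i ∧
      eig (A.submatrix f f) hB i ≤ eig A hA i := by
  intro i hi him
  obtain ⟨k, rfl⟩ := Nat.exists_eq_add_of_le' hi
  have hmn : m ≤ n := by simpa using Fintype.card_le_of_injective f hf
  have hkm : k < Fintype.card (Fin m) := by rw [Fintype.card_fin]; omega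
  have hkn : k < Fintype.card (Fin n) := by rw [Fintype.card_fin]; omega
  have hlow : n - m + k < Fintype.card (Fin n) := by rw [Fintype.card_fin]; omega
  rw [show n - m + (k + 1) = n - m + k + 1 by omega, eig_eq_eigenvalues₀ _ _ hkm,
    eig_eq_eigenvalues₀ _ _ hkn, eig_eq_eigenvalues₀ _ _ hlow]
  exact ⟨hA.le_eigenvalues₀_submatrix hf hB _ _ (by simp only [Fintype.card_fin]; omega),
    hA.eigenvalues₀_submatrix_le hf hB _ _ le_rfl⟩
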